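/- arXiv:2410.04706 — 3 statements merged into one kernel-verified Lean document; each statement's English description precedes it below -/
import Mathlib

section
/- A point x = (x₁, x₂, …) in the unit sphere of ℓ_∞ (real or complex) is a Daugavet point if and only if limsup_n |x_n| = 1. -/
open Metric Set Filter MeasureTheory

section Defs
variable (𝕜 : Type*) [RCLike 𝕜] {X : Type*} [NormedAddCommGroup X] [NormedSpace 𝕜 X]

/-- A slice of the closed unit ball of `X` determined by a norm-one functional and `α > 0`. -/
def IsSlice (S : Set X) : Prop :=
  ∃ (f : X →L[𝕜] 𝕜) (α : ℝ), ‖f‖ = 1 ∧ 0 < α ∧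
    S = {y | y ∈ closedBall (0:X) 1 ∧ 1 - α < RCLike.re (f y)}

/-- A convex combination of slices of the closed unit ball of `X`. -/
def IsCCS (C : Set X) : Prop :=
  ∃ (n : ℕ) (lam : Fin n → ℝ) (S : Fin n → Set X), 0 < n ∧ (∀ i, 0 < lam i) ∧
    (∑ i, lam i) = 1 ∧ (∀ i, IsSlice 𝕜 (S i)) ∧
    C = {x | ∃ y : Fin n → X, (∀ i, y i ∈ S i) ∧ x = ∑ i, (lam i : 𝕜) • y i}

/-- A set is weakly open if it is open in the weak topology on `X`. -/
def WeaklyOpen (W : Set X) : Prop := IsOpen (show Set (WeakSpace 𝕜 X) from W)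

def DaugavetPt (x : X) : Prop :=
  ‖x‖ = 1 ∧ ∀ S : Set X, IsSlice 𝕜 S → sSup ((fun y => ‖x - y‖) '' S) = 2

def NablaPt (x : X) : Prop :=
  ‖x‖ = 1 ∧ ∀ S : Set X, IsSlice 𝕜 S → x ∉ S → sSup ((fun y => ‖x - y‖) '' S) = 2

def DeltaPt (x : X) : Prop :=
  ‖x‖ = 1 ∧ ∀ S : Set X, IsSlice 𝕜 S → x ∈ S → sSup ((fun y => ‖x - y‖) '' S) = 2

def CcsDaugavetPt (x : X) : Prop :=
  ‖x‖ = 1 ∧ ∀ C : Set X, IsCCS 𝕜 C → sSup ((fun y => ‖x - y‖) '' C) = 2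

def CcsDeltaPt (x : X) : Prop :=
  ‖x‖ = 1 ∧ ∀ C : Set X, IsCCS 𝕜 C → x ∈ C → sSup ((fun y => ‖x - y‖) '' C) = 2

def SuperDaugavetPt (x : X) : Prop :=
  ‖x‖ = 1 ∧ ∀ W : Set X, WeaklyOpen 𝕜 W → (W ∩ closedBall 0 1).Nonempty →
    sSup ((fun y => ‖x - y‖) '' (W ∩ closedBall 0 1)) = 2

def SuperDeltaPt (x : X) : Prop :=
  ‖x‖ = 1 ∧ ∀ W : Set X, WeaklyOpen 𝕜 W → x ∈ W ∩ closedBall 0 1 →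
    sSup ((fun y => ‖x - y‖) '' (W ∩ closedBall 0 1)) = 2

def DentingPt (x : X) : Prop :=
  ‖x‖ = 1 ∧ ∀ ε > 0, ∃ S : Set X, IsSlice 𝕜 S ∧ x ∈ S ∧ Metric.diam S < ε

/-- `x` is a `Δ_p` point: for every slice `S(f, α)` containing `x` and every `ε > 0`, the
enlarged slice `S(f, pα)` contains a point at distance at least `2 - ε` from `x`. -/
def DeltaPPt (p : ℝ) (x : X) : Prop :=
  ‖x‖ = 1 ∧ ∀ (f : X →L[𝕜] 𝕜) (α ε : ℝ), ‖f‖ = 1 → 0 < α → 0 < ε →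
    (x ∈ closedBall (0:X) 1 ∧ 1 - α < RCLike.re (f x)) →
    ∃ u, u ∈ closedBall (0:X) 1 ∧ 1 - p * α < RCLike.re (f u) ∧ 2 - ε ≤ ‖x - u‖

/-- A measure-theoretic atom for `μ`. -/
def MeasAtom {Ω : Type*} [MeasurableSpace Ω] (μ : Measure Ω) (A : Set Ω) : Prop :=
  MeasurableSet A ∧ 0 < μ A ∧
    ∀ B ⊆ A, MeasurableSet B → μ B = 0 ∨ μ (A \ B) = 0

end Defs


open scoped ENNReal

section Helpers
variable {𝕜 : Type*} [RCLike 𝕜]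

private abbrev Linf (𝕜 : Type*) [RCLike 𝕜] : Type _ := lp (fun _ : ℕ => 𝕜) ⊤

-- construct an element from a pointwise-bounded function
private lemma mem_linf {f : ℕ → 𝕜} {C : ℝ} (h : ∀ n, ‖f n‖ ≤ C) :
    Memℓp (fun n : ℕ => f n) (⊤ : ℝ≥0∞) :=
  memℓp_infty ⟨C, by rintro r ⟨n, rfl⟩; exact h n⟩

private lemma norm_le_linf {z : Linf 𝕜} {C : ℝ} (hC : 0 ≤ C) (h : ∀ n, ‖z n‖ ≤ C) : ‖z‖ ≤ C :=
  lp.norm_le_of_forall_le hC h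

private lemma apply_le_norm (z : Linf 𝕜) (n : ℕ) : ‖z n‖ ≤ ‖z‖ :=
  lp.norm_apply_le_norm ENNReal.top_ne_zero z n

-- sum of |f(e_n)| over a finset is at most ‖f‖
private lemma sum_norm_single_le (f : Linf 𝕜 →L[𝕜] 𝕜) (hf : ‖f‖ = 1) (F : Finset ℕ) :
    ∑ n ∈ F, ‖f (lp.single ⊤ n 1)‖ ≤ 1 := by
  classical
  set e : ℕ → Linf 𝕜 := fun n => lp.single ⊤ n 1 with he
  set c : ℕ → 𝕜 := fun n => if f (e n) = 0 then 1 else (starRingEnd 𝕜) (f (e n)) * (‖f (e n)‖ : 𝕜)⁻¹ with hc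
  have hcnorm : ∀ n, ‖c n‖ ≤ 1 := by
    intro n
    by_cases h : f (e n) = 0
    · simp [hc, h]
    · simp only [hc, if_neg h, norm_mul, RCLike.norm_conj, norm_inv, RCLike.norm_ofReal,
        abs_norm]
      rw [mul_inv_cancel₀ (norm_ne_zero_iff.2 h)]
  have hcf : ∀ n, c n * f (e n) = (‖f (e n)‖ : 𝕜) := by
    intro n
    by_cases h : f (e n) = 0
    · simp [hc, h]
    · simp only [hc, if_neg h]
      rw [mul_comm _ ((‖f (e n)‖:𝕜)⁻¹), mul_assoc, RCLike.conj_mul]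
      rw [inv_mul_eq_div, ← RCLike.ofReal_pow, ← RCLike.ofReal_div]
      congr 1
      rw [sq, mul_div_assoc, div_self (norm_ne_zero_iff.2 h), mul_one]
  set w : Linf 𝕜 := ⟨fun n => if n ∈ F then c n else 0, mem_linf (f := fun n => if n ∈ F then c n else 0) (C := 1) (by
    intro n; by_cases h : n ∈ F
    · simpa [h] using hcnorm n
    · simp [h])⟩ with hw
  have hwsum : w = ∑ n ∈ F, lp.single ⊤ n (c n) := by
    ext m
    simp only [hw, lp.coeFn_sum, Finset.sum_apply, lp.single_apply, eq_rec_constant]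
    simp only [Pi.single_apply, Finset.sum_ite_eq]
  have hwnorm : ‖w‖ ≤ 1 := norm_le_linf zero_le_one (by
    intro n; by_cases h : n ∈ F
    · simpa [hw, h] using hcnorm n
    · simp [hw, h])
  have hfw : f w = ((∑ n ∈ F, ‖f (e n)‖ : ℝ) : 𝕜) := by
    rw [hwsum, map_sum]
    rw [RCLike.ofReal_sum]
    refine Finset.sum_congr rfl fun n _ => ?_
    have : lp.single (⊤ : ℝ≥0∞) n (c n) = c n • e n := by
      rw [he]
      rw [← lp.single_smul]
      norm_num
    rw [this, _root_.map_smul, smul_eq_mul, hcf n]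
  have := f.le_opNorm w
  rw [hfw, hf, one_mul] at this
  have h2 : ‖((∑ n ∈ F, ‖f (e n)‖ : ℝ) : 𝕜)‖ = ∑ n ∈ F, ‖f (e n)‖ := by
    rw [RCLike.norm_ofReal, abs_of_nonneg (Finset.sum_nonneg fun n _ => norm_nonneg _)]
  rw [h2] at this
  exact this.trans hwnorm

private lemma finite_big_single (f : Linf 𝕜 →L[𝕜] 𝕜) (hf : ‖f‖ = 1) {δ : ℝ} (hδ : 0 < δ) :
    {n : ℕ | δ ≤ ‖f (lp.single ⊤ n 1)‖}.Finite := by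
  by_contra h
  rw [← Set.not_infinite, not_not] at h
  obtain ⟨F, hFsub, hFcard⟩ := h.exists_subset_card_eq (⌈δ⁻¹⌉₊ + 1)
  have h1 : ∑ n ∈ F, ‖f (lp.single ⊤ n 1)‖ ≤ 1 := sum_norm_single_le f hf F
  have h2 : (F.card : ℝ) * δ ≤ ∑ n ∈ F, ‖f (lp.single ⊤ n 1)‖ := by
    calc (F.card : ℝ) * δ = ∑ _n ∈ F, δ := by rw [Finset.sum_const, nsmul_eq_mul]
      _ ≤ _ := Finset.sum_le_sum fun n hn => hFsub hn
  have h3 : δ⁻¹ < (F.card : ℝ) := by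
    rw [hFcard]; push_cast; linarith [Nat.le_ceil δ⁻¹]
  have h4 : (1:ℝ) < (F.card : ℝ) * δ := by
    have := mul_lt_mul_of_pos_right h3 hδ
    rwa [inv_mul_cancel₀ (ne_of_gt hδ)] at this
  linarith

private lemma exists_avg_functional (F : Finset ℕ) (hF : F.Nonempty) (σ : ℕ → 𝕜)
    (hσ : ∀ n ∈ F, ‖σ n‖ = 1) :
    ∃ f : Linf 𝕜 →L[𝕜] 𝕜, ‖f‖ = 1 ∧
      ∀ y : Linf 𝕜, f y = ∑ n ∈ F, ((F.card : 𝕜)⁻¹ * (starRingEnd 𝕜) (σ n)) * y n := by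
  classical
  have hk : (0:ℝ) < F.card := by exact_mod_cast Finset.card_pos.mpr hF
  set g : Linf 𝕜 →ₗ[𝕜] 𝕜 :=
    { toFun := fun y => ∑ n ∈ F, ((F.card : 𝕜)⁻¹ * (starRingEnd 𝕜) (σ n)) * y n
      map_add' := by
        intro y z
        simp only [lp.coeFn_add, Pi.add_apply, mul_add]
        rw [Finset.sum_add_distrib]
      map_smul' := by
        intro c y
        simp only [lp.coeFn_smul, Pi.smul_apply, smul_eq_mul, RingHom.id_apply]
        rw [Finset.mul_sum]
        exact Finset.sum_congr rfl fun n _ => by ring } with hg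
  have hbound : ∀ y : Linf 𝕜, ‖g y‖ ≤ 1 * ‖y‖ := by
    intro y
    calc ‖g y‖ ≤ ∑ n ∈ F, ‖((F.card : 𝕜)⁻¹ * (starRingEnd 𝕜) (σ n)) * y n‖ :=
          norm_sum_le _ _
      _ ≤ ∑ n ∈ F, (F.card : ℝ)⁻¹ * ‖y‖ := by
          refine Finset.sum_le_sum fun n hn => ?_
          rw [norm_mul, norm_mul, RCLike.norm_conj, hσ n hn, mul_one]
          have h1 : ‖((F.card : 𝕜))⁻¹‖ = (F.card : ℝ)⁻¹ := by
            rw [norm_inv, RCLike.norm_natCast]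
          rw [h1]
          exact mul_le_mul_of_nonneg_left (apply_le_norm y n) (by positivity)
      _ = 1 * ‖y‖ := by
          rw [Finset.sum_const, nsmul_eq_mul, ← mul_assoc, mul_inv_cancel₀ (ne_of_gt hk), one_mul]
  set f := g.mkContinuous 1 hbound with hf
  have happly : ∀ y : Linf 𝕜, f y = ∑ n ∈ F, ((F.card : 𝕜)⁻¹ * (starRingEnd 𝕜) (σ n)) * y n :=
    fun y => rfl
  refine ⟨f, le_antisymm (g.mkContinuous_norm_le zero_le_one hbound) ?_, happly⟩
  -- test vector
  set z : Linf 𝕜 := ⟨fun n => if n ∈ F then σ n else 0,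
    mem_linf (f := fun n => if n ∈ F then σ n else 0) (C := 1) (by
      intro n; by_cases h : n ∈ F
      · simp [h, hσ n h]
      · simp [h])⟩ with hz
  have hznorm : ‖z‖ ≤ 1 := norm_le_linf zero_le_one (by
    intro n; by_cases h : n ∈ F
    · simp only [hz]; simp [h, hσ n h]
    · simp only [hz]; simp [h])
  have hfz : f z = 1 := by
    rw [happly]
    have : ∀ n ∈ F, ((F.card : 𝕜)⁻¹ * (starRingEnd 𝕜) (σ n)) * z n = (F.card : 𝕜)⁻¹ := by
      intro n hn
      have hzn : z n = σ n := by simp only [hz]; simp [hn]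
      rw [hzn, mul_assoc, RCLike.conj_mul, hσ n hn]
      norm_num
    rw [Finset.sum_congr rfl this, Finset.sum_const, nsmul_eq_mul,
      mul_inv_cancel₀ (by exact_mod_cast ne_of_gt hk)]
  have := f.le_opNorm z
  rw [hfz, norm_one] at this
  calc (1:ℝ) ≤ ‖f‖ * ‖z‖ := this
    _ ≤ ‖f‖ * 1 := mul_le_mul_of_nonneg_left hznorm (norm_nonneg _)
    _ = ‖f‖ := mul_one _

end Helpers

set_option maxHeartbeats 2000000 in
/-- A point `x = (x₁, x₂, …)` in the unit sphere of `ℓ_∞` is a Daugavet point iff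
`limsup_n ‖x n‖ = 1`. -/
theorem daugavet_linfty_iff {𝕜 : Type*} [RCLike 𝕜]
    (x : lp (fun _ : ℕ => 𝕜) ⊤) (hx : ‖x‖ = 1) :
    DaugavetPt 𝕜 x ↔ Filter.limsup (fun n => ‖x n‖) Filter.atTop = 1 := by
  classical
  have hxb : ∀ n, ‖x n‖ ≤ 1 := fun n => hx ▸ apply_le_norm x n
  have hbdd : IsBoundedUnder (· ≤ ·) atTop (fun n => ‖x n‖) :=
    Filter.isBoundedUnder_of ⟨1, hxb⟩
  have hbdd' : IsBoundedUnder (· ≥ ·) atTop (fun n => ‖x n‖) :=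
    Filter.isBoundedUnder_of ⟨0, fun n => norm_nonneg _⟩
  have hcob : IsCoboundedUnder (· ≤ ·) atTop (fun n => ‖x n‖) :=
    hbdd'.isCoboundedUnder_le
  constructor
  · -- Daugavet → limsup = 1
    intro hD
    by_contra hne
    have hle : limsup (fun n => ‖x n‖) atTop ≤ 1 :=
      Filter.limsup_le_of_le hcob (Filter.Eventually.of_forall hxb)
    set L := limsup (fun n => ‖x n‖) atTop with hL
    have hL1 : L < 1 := lt_of_le_of_ne hle hne
    have hL0 : 0 ≤ L :=
      Filter.le_limsup_of_frequently_le
        ((Filter.Eventually.of_forall (fun n => norm_nonneg (x n))).frequently) hbdd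
    obtain ⟨r, hr0, hrL, hr1⟩ : ∃ r : ℝ, 0 < r ∧ L < r ∧ r < 1 :=
      ⟨(1 + L) / 2, by linarith, by linarith, by linarith⟩
    have hev : ∀ᶠ n in atTop, ‖x n‖ < r := Filter.eventually_lt_of_limsup_lt hrL hbdd
    obtain ⟨N, hN⟩ := Filter.eventually_atTop.1 hev
    have hFfin : {n : ℕ | r < ‖x n‖}.Finite := by
      refine (Set.finite_Iio N).subset fun n hn => ?_
      by_contra hn'
      simp only [Set.mem_Iio, not_lt] at hn'
      exact absurd hn (not_lt.2 (hN n hn').le)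
    set Fs := hFfin.toFinset with hFs
    have hFmem : ∀ {n : ℕ}, n ∈ Fs ↔ r < ‖x n‖ := fun {n} => hFfin.mem_toFinset
    have hFne : Fs.Nonempty := by
      by_contra hFe
      rw [Finset.not_nonempty_iff_eq_empty] at hFe
      have hall : ∀ n, ‖x n‖ ≤ r := by
        intro n
        by_contra h'
        push_neg at h'
        have : n ∈ Fs := hFmem.2 h'
        simp [hFe] at this
      have hxr : ‖x‖ ≤ r := norm_le_linf hr0.le hall
      rw [hx] at hxr
      linarith
    set k := Fs.card with hkdef
    have hk : (0:ℝ) < k := by exact_mod_cast Finset.card_pos.mpr hFne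
    set σ : ℕ → 𝕜 := fun n => x n * ((‖x n‖ : ℝ) : 𝕜)⁻¹ with hσdef
    have hσ : ∀ n ∈ Fs, ‖σ n‖ = 1 := by
      intro n hn
      have hxn : r < ‖x n‖ := hFmem.1 hn
      have hxn0 : ‖x n‖ ≠ 0 := ne_of_gt (lt_trans hr0 hxn)
      simp only [hσdef, norm_mul, norm_inv, RCLike.norm_ofReal, abs_norm]
      exact mul_inv_cancel₀ hxn0
    obtain ⟨f, hfnorm, hfapply⟩ := exists_avg_functional Fs hFne σ hσ
    obtain ⟨α, hα, hkα⟩ : ∃ α : ℝ, 0 < α ∧ (k : ℝ) * α = r ^ 2 / 2 :=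
      ⟨r ^ 2 / (2 * k), by positivity, by field_simp⟩
    have hsup := hD.2 _ ⟨f, α, hfnorm, hα, rfl⟩
    have hub : ∀ t ∈ (fun y => ‖x - y‖) ''
        {y | y ∈ closedBall (0 : lp (fun _ : ℕ => 𝕜) ⊤) 1 ∧ 1 - α < RCLike.re (f y)},
        t ≤ 1 + r := by
      rintro t ⟨y, ⟨hy1, hy2⟩, rfl⟩
      have hynorm : ‖y‖ ≤ 1 := by rwa [mem_closedBall_zero_iff] at hy1
      have hyn1 : ∀ n, ‖y n‖ ≤ 1 := fun n => (apply_le_norm y n).trans hynorm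
      refine norm_le_linf (by linarith) fun m => ?_
      have hxym : (x - y) m = x m - y m := by rw [lp.coeFn_sub]; rfl
      rw [hxym]
      by_cases hm : m ∈ Fs
      · have hxm : r < ‖x m‖ := hFmem.1 hm
        have hxmpos : 0 < ‖x m‖ := lt_trans hr0 hxm
        have hxm0 : ‖x m‖ ≠ 0 := ne_of_gt hxmpos
        have hre : 1 - α < (k : ℝ)⁻¹ * ∑ n ∈ Fs, RCLike.re ((starRingEnd 𝕜) (σ n) * y n) := by
          have hcalc : RCLike.re (f y)
              = (k : ℝ)⁻¹ * ∑ n ∈ Fs, RCLike.re ((starRingEnd 𝕜) (σ n) * y n) := by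
            rw [hfapply, map_sum, Finset.mul_sum]
            refine Finset.sum_congr rfl fun n _ => ?_
            have hcast : ((Fs.card : 𝕜))⁻¹ = (((k : ℝ)⁻¹ : ℝ) : 𝕜) := by
              rw [RCLike.ofReal_inv, RCLike.ofReal_natCast, hkdef]
            rw [mul_assoc, hcast, RCLike.re_ofReal_mul]
          rw [← hcalc]
          exact hy2
        have hterm : ∀ n ∈ Fs, RCLike.re ((starRingEnd 𝕜) (σ n) * y n) ≤ 1 := by
          intro n hn
          refine (RCLike.re_le_norm _).trans ?_
          rw [norm_mul, RCLike.norm_conj, hσ n hn, one_mul]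
          exact hyn1 n
        have hsum_le : ∑ n ∈ Fs, RCLike.re ((starRingEnd 𝕜) (σ n) * y n)
            ≤ RCLike.re ((starRingEnd 𝕜) (σ m) * y m) + ((k : ℝ) - 1) := by
          rw [← Finset.add_sum_erase _ _ hm]
          have h2 : ((Fs.erase m).card : ℝ) = (k : ℝ) - 1 := by
            rw [Finset.card_erase_of_mem hm, ← hkdef]
            have h1k : 1 ≤ k := Finset.card_pos.mpr hFne
            push_cast [Nat.cast_sub h1k]
            ring
          have h1 : ∑ n ∈ Fs.erase m, RCLike.re ((starRingEnd 𝕜) (σ n) * y n)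
              ≤ (k : ℝ) - 1 := by
            calc ∑ n ∈ Fs.erase m, RCLike.re ((starRingEnd 𝕜) (σ n) * y n)
                ≤ (Fs.erase m).card • (1:ℝ) :=
                  Finset.sum_le_card_nsmul _ _ 1 fun n hn =>
                    hterm n (Finset.mem_of_mem_erase hn)
              _ = (k : ℝ) - 1 := by rw [nsmul_eq_mul, mul_one, h2]
          linarith
        have hS' : (k : ℝ) * (1 - α) < ∑ n ∈ Fs, RCLike.re ((starRingEnd 𝕜) (σ n) * y n) := by
          have h3 := mul_lt_mul_of_pos_left hre hk
          rwa [← mul_assoc, mul_inv_cancel₀ (ne_of_gt hk), one_mul] at h3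
        have htm : 1 - (k : ℝ) * α < RCLike.re ((starRingEnd 𝕜) (σ m) * y m) := by nlinarith
        have hq : ‖σ m - y m‖ ^ 2 ≤ r ^ 2 := by
          have hns := norm_sub_sq (𝕜 := 𝕜) (σ m) (y m)
          rw [RCLike.inner_apply] at hns
          rw [mul_comm (y m)] at hns
          have h1 : ‖σ m‖ = 1 := hσ m hm
          rw [h1, one_pow] at hns
          nlinarith [hyn1 m, norm_nonneg (y m), htm, hkα]
        have hσy : ‖σ m - y m‖ ≤ r := by
          nlinarith [norm_nonneg (σ m - y m), hr0, hq]
        have hxσ : ‖x m - σ m‖ = 1 - ‖x m‖ := by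
          have hfac : x m - σ m = x m * (1 - (((‖x m‖ : ℝ)) : 𝕜)⁻¹) := by
            simp only [hσdef]
            ring
          rw [hfac, norm_mul]
          have hcast : (1 : 𝕜) - (((‖x m‖ : ℝ)) : 𝕜)⁻¹ = ((1 - (‖x m‖)⁻¹ : ℝ) : 𝕜) := by
            push_cast
            ring
          have h9 : ‖x m‖ * (‖x m‖)⁻¹ = 1 := mul_inv_cancel₀ hxm0
          have hnp : 1 - (‖x m‖)⁻¹ ≤ 0 := by nlinarith [hxb m, hxmpos]
          rw [hcast, RCLike.norm_ofReal, abs_of_nonpos hnp, neg_sub, mul_sub,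
            mul_inv_cancel₀ hxm0, mul_one]
        calc ‖x m - y m‖ ≤ ‖x m - σ m‖ + ‖σ m - y m‖ :=
              norm_sub_le_norm_sub_add_norm_sub _ _ _
          _ ≤ (1 - ‖x m‖) + r := add_le_add (le_of_eq hxσ) hσy
          _ ≤ 1 + r := by linarith [norm_nonneg (x m)]
      · have hxm : ‖x m‖ ≤ r := le_of_not_gt fun h' => hm (hFmem.2 h')
        calc ‖x m - y m‖ ≤ ‖x m‖ + ‖y m‖ := norm_sub_le _ _
          _ ≤ r + 1 := add_le_add hxm (hyn1 m)
          _ = 1 + r := add_comm r 1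
    have hle2 : sSup ((fun y => ‖x - y‖) ''
        {y | y ∈ closedBall (0 : lp (fun _ : ℕ => 𝕜) ⊤) 1 ∧ 1 - α < RCLike.re (f y)})
        ≤ 1 + r := Real.sSup_le hub (by linarith)
    rw [hsup] at hle2
    linarith
  · -- limsup = 1 → Daugavet
    intro hlim
    refine ⟨hx, ?_⟩
    rintro S ⟨f, α, hfnorm, hα, rfl⟩
    set β : ℝ := min α 1 with hβdef
    have hβ0 : 0 < β := lt_min hα one_pos
    have hβ1 : β ≤ 1 := min_le_right _ _
    have hβα : β ≤ α := min_le_left _ _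
    -- a point y in the slice with large functional value
    obtain ⟨v, hv1, hv2⟩ := f.exists_lt_apply_of_lt_opNorm (r := 1 - β / 2)
      (by rw [hfnorm]; linarith)
    have hfv0 : f v ≠ 0 := by
      intro h0
      rw [h0, norm_zero] at hv2
      linarith
    have hfvn0 : ‖f v‖ ≠ 0 := norm_ne_zero_iff.2 hfv0
    set c : 𝕜 := (starRingEnd 𝕜) (f v) * ((‖f v‖ : ℝ) : 𝕜)⁻¹ with hcdef
    have hcnorm : ‖c‖ = 1 := by
      rw [hcdef, norm_mul, RCLike.norm_conj, norm_inv, RCLike.norm_ofReal, abs_norm]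
      exact mul_inv_cancel₀ hfvn0
    set y := c • v with hydef
    have hynorm : ‖y‖ ≤ 1 := by
      rw [hydef, norm_smul, hcnorm, one_mul]
      exact hv1.le
    have hfy : f y = ((‖f v‖ : ℝ) : 𝕜) := by
      rw [hydef, _root_.map_smul, smul_eq_mul, hcdef]
      rw [mul_comm ((starRingEnd 𝕜) (f v)) _, mul_assoc, RCLike.conj_mul]
      rw [inv_mul_eq_div, ← RCLike.ofReal_pow, ← RCLike.ofReal_div]
      congr 1
      rw [sq, mul_div_assoc, div_self hfvn0, mul_one]
    have hrefy : 1 - β / 2 < RCLike.re (f y) := by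
      rw [hfy, RCLike.ofReal_re]
      exact hv2
    -- key claim
    have key : ∀ ε : ℝ, 0 < ε → ε ≤ 1 →
        ∃ z, (z ∈ closedBall (0 : lp (fun _ : ℕ => 𝕜) ⊤) 1 ∧ 1 - α < RCLike.re (f z)) ∧
          2 - ε < ‖x - z‖ := by
      intro ε hε hε1
      have hfreq : ∃ᶠ n in atTop, 1 - ε < ‖x n‖ :=
        Filter.frequently_lt_of_lt_limsup hcob (by rw [hlim]; linarith)
      have hfin := finite_big_single f hfnorm (δ := β / 4) (by linarith)
      have hev2 : ∀ᶠ n in atTop, ‖f (lp.single ⊤ n 1)‖ < β / 4 := by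
        have h10 := Set.Finite.eventually_cofinite_notMem hfin
        rw [Nat.cofinite_eq_atTop] at h10
        exact h10.mono fun n hn => lt_of_not_ge hn
      obtain ⟨n, hn1, hn2⟩ := (hfreq.and_eventually hev2).exists
      have hxn0 : (0:ℝ) < ‖x n‖ := by linarith
      have hxnne : ‖x n‖ ≠ 0 := ne_of_gt hxn0
      set σ : 𝕜 := x n * ((‖x n‖ : ℝ) : 𝕜)⁻¹ with hσdef
      have hσnorm : ‖σ‖ = 1 := by
        rw [hσdef, norm_mul, norm_inv, RCLike.norm_ofReal, abs_norm]
        exact mul_inv_cancel₀ hxnne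
      set z := y + lp.single ⊤ n (-σ - y n) with hzdef
      have hzn : z n = -σ := by
        rw [hzdef, lp.coeFn_add, Pi.add_apply, lp.single_apply_self]
        ring
      have hzm : ∀ m, m ≠ n → z m = y m := by
        intro m hmn
        rw [hzdef, lp.coeFn_add, Pi.add_apply, lp.single_apply_ne ⊤ n _ hmn, add_zero]
      have hzball : z ∈ closedBall (0 : lp (fun _ : ℕ => 𝕜) ⊤) 1 := by
        rw [mem_closedBall_zero_iff]
        refine norm_le_linf zero_le_one fun m => ?_
        by_cases hmn : m = n
        · subst hmn
          rw [hzn, norm_neg, hσnorm]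
        · rw [hzm m hmn]
          exact (apply_le_norm y m).trans hynorm
      have hfz : 1 - α < RCLike.re (f z) := by
        have h1 : f z = f y + (-σ - y n) * f (lp.single ⊤ n 1) := by
          rw [hzdef, map_add]
          congr 1
          have h11 : lp.single (⊤ : ℝ≥0∞) n (-σ - y n)
              = (-σ - y n) • (lp.single (⊤ : ℝ≥0∞) n (1 : 𝕜) : lp (fun _ : ℕ => 𝕜) ⊤) := by
            rw [← lp.single_smul, smul_eq_mul, mul_one]
          rw [h11, _root_.map_smul, smul_eq_mul]
        have h2 : ‖(-σ - y n) * f (lp.single ⊤ n 1)‖ < β / 2 := by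
          rw [norm_mul]
          have h21 : ‖-σ - y n‖ ≤ 2 := by
            refine (norm_sub_le _ _).trans ?_
            rw [norm_neg, hσnorm]
            linarith [(apply_le_norm y n).trans hynorm]
          calc ‖-σ - y n‖ * ‖f (lp.single ⊤ n 1)‖ ≤ 2 * ‖f (lp.single ⊤ n 1)‖ :=
                mul_le_mul_of_nonneg_right h21 (norm_nonneg _)
            _ < 2 * (β / 4) := by
                have := norm_nonneg (f (lp.single (⊤ : ℝ≥0∞) n (1:𝕜)))
                linarith
            _ = β / 2 := by ring
        have h3 : RCLike.re (f z)
            = RCLike.re (f y) + RCLike.re ((-σ - y n) * f (lp.single ⊤ n 1)) := by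
          rw [h1, map_add]
        have h4 := RCLike.abs_re_le_norm ((-σ - y n) * f (lp.single ⊤ n 1))
        have h5 := neg_abs_le (RCLike.re ((-σ - y n) * f (lp.single ⊤ n 1)))
        rw [h3]
        have : 1 - β ≤ 1 - α ∨ True := Or.inr trivial
        linarith
      have hdist : 2 - ε < ‖x - z‖ := by
        have h5 : ‖(x - z) n‖ ≤ ‖x - z‖ := apply_le_norm _ n
        have h6 : (x - z) n = x n - z n := by rw [lp.coeFn_sub]; rfl
        have h7 : x n - z n = (((‖x n‖ : ℝ) : 𝕜) + 1) * σ := by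
          rw [hzn, sub_neg_eq_add, hσdef]
          have h71 : ((‖x n‖ : ℝ) : 𝕜) ≠ 0 := by
            rw [Ne, RCLike.ofReal_eq_zero]
            exact hxnne
          field_simp
        have h8 : ‖x n - z n‖ = ‖x n‖ + 1 := by
          rw [h7, norm_mul, hσnorm, mul_one]
          have : (((‖x n‖ : ℝ) : 𝕜) + 1) = ((‖x n‖ + 1 : ℝ) : 𝕜) := by push_cast; ring
          rw [this, RCLike.norm_ofReal, abs_of_nonneg (by linarith)]
        have h9 : 2 - ε < ‖x n - z n‖ := by rw [h8]; linarith
        rw [h6] at h5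
        linarith
      exact ⟨z, ⟨hzball, hfz⟩, hdist⟩
    -- conclude
    obtain ⟨z₀, hz₀, _⟩ := key 1 one_pos le_rfl
    have hbd : ∀ t ∈ (fun y => ‖x - y‖) ''
        {y | y ∈ closedBall (0 : lp (fun _ : ℕ => 𝕜) ⊤) 1 ∧ 1 - α < RCLike.re (f y)},
        t ≤ 2 := by
      rintro t ⟨w, ⟨hw1, _⟩, rfl⟩
      have hwnorm : ‖w‖ ≤ 1 := by rwa [mem_closedBall_zero_iff] at hw1
      calc ‖x - w‖ ≤ ‖x‖ + ‖w‖ := norm_sub_le _ _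
        _ ≤ 2 := by rw [hx]; linarith
    have hbdd2 : BddAbove ((fun y => ‖x - y‖) ''
        {y | y ∈ closedBall (0 : lp (fun _ : ℕ => 𝕜) ⊤) 1 ∧ 1 - α < RCLike.re (f y)}) :=
      ⟨2, hbd⟩
    refine le_antisymm (Real.sSup_le hbd (by norm_num)) ?_
    refine le_of_forall_sub_le fun ε hε => ?_
    obtain ⟨z, hzS, hzd⟩ := key (min ε 1) (lt_min hε one_pos) (min_le_right _ _)
    have hmem : ‖x - z‖ ∈ (fun y => ‖x - y‖) ''
        {y | y ∈ closedBall (0 : lp (fun _ : ℕ => 𝕜) ⊤) 1 ∧ 1 - α < RCLike.re (f y)} :=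
      ⟨z, hzS, rfl⟩
    have hle3 := le_csSup hbdd2 hmem
    have hmin : 2 - ε ≤ 2 - min ε 1 := by linarith [min_le_left ε 1]
    linarith
end

section
/- Let L be a locally compact Hausdorff space and X a locally uniformly rotund Banach space. If f ∈ S_{C₀(L,X)} is a Δ point, then f attains its norm at a limit point of L: there exists a non-isolated t₀ ∈ L with ‖f(t₀)‖ = 1. -/
open Metric Set Filter MeasureTheory

/-- `X` is locally uniformly rotund: for every `x ∈ S_X` and `ε > 0`, the modulus
`δ_X(x, ε) = inf {1 - ‖(x+y)/2‖ : y ∈ B_X, ‖x - y‖ ≥ ε}` is positive. -/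
def LUR (X : Type*) [NormedAddCommGroup X] [NormedSpace ℝ X] : Prop :=
  ∀ x : X, ‖x‖ = 1 → ∀ ε > (0:ℝ), ∃ δ > (0:ℝ), ∀ y ∈ Metric.closedBall (0:X) 1,
    ε ≤ ‖x - y‖ → δ ≤ 1 - ‖(1/2 : ℝ) • (x + y)‖


private lemma lur_key' {X : Type*} [NormedAddCommGroup X] [NormedSpace ℝ X]
    (hLUR : LUR X) (x : X) (hx : ‖x‖ = 1) (φ : X →L[ℝ] ℝ)
    (hφn : ‖φ‖ ≤ 1) (hφx : φ x = 1) :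
    ∃ δ > (0:ℝ), ∀ y : X, ‖y‖ ≤ 1 → 1 - δ < φ y → ‖x - y‖ < 1 := by
  obtain ⟨δ, hδ, H⟩ := hLUR x hx 1 one_pos
  refine ⟨δ, hδ, fun y hy hφy => ?_⟩
  by_contra hcon
  push_neg at hcon
  have h1 := H y (by simpa [Metric.mem_closedBall, dist_zero_right] using hy) hcon
  set v := (1/2 : ℝ) • (x + y) with hv
  have hb : φ v ≤ ‖v‖ := by
    calc φ v ≤ |φ v| := le_abs_self _
    _ = ‖φ v‖ := (Real.norm_eq_abs _).symm
    _ ≤ ‖φ‖ * ‖v‖ := φ.le_opNorm _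
    _ ≤ 1 * ‖v‖ := by gcongr
    _ = ‖v‖ := one_mul _
  have he : φ v = (1/2) * (1 + φ y) := by
    simp [hv, _root_.map_smul, map_add, hφx, smul_eq_mul]; ring
  linarith

private lemma c0_norm_le' {L X : Type*} [TopologicalSpace L] [NormedAddCommGroup X]
    (f : ZeroAtInftyContinuousMap L X) {C : ℝ} (hC : 0 ≤ C) (h : ∀ t, ‖f t‖ ≤ C) : ‖f‖ ≤ C := by
  rw [← ZeroAtInftyContinuousMap.norm_toBCF_eq_norm]
  exact (BoundedContinuousFunction.norm_le hC).mpr h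

private lemma c0_norm_apply_le' {L X : Type*} [TopologicalSpace L] [NormedAddCommGroup X]
    (f : ZeroAtInftyContinuousMap L X) (t : L) : ‖f t‖ ≤ ‖f‖ := by
  rw [← ZeroAtInftyContinuousMap.norm_toBCF_eq_norm]
  exact BoundedContinuousFunction.norm_coe_le_norm f.toBCF t

set_option maxHeartbeats 1000000 in
/-- If `X` is LUR and `f ∈ S_{C₀(L,X)}` is a Δ point, then `f` attains its norm at a
non-isolated point of `L`. -/
theorem delta_C0_attains_at_limit_point {L : Type*} [TopologicalSpace L]
    [LocallyCompactSpace L] [T2Space L] {X : Type*} [NormedAddCommGroup X]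
    [NormedSpace ℝ X] [CompleteSpace X] (hLUR : LUR X)
    (f : ZeroAtInftyContinuousMap L X) (hf : ‖f‖ = 1) (hΔ : DeltaPt ℝ f) :
    ∃ t₀ : L, (nhdsWithin t₀ {t₀}ᶜ).NeBot ∧ ‖f t₀‖ = 1 := by
  classical
  by_contra hcon
  push_neg at hcon
  set A : Set L := {t | ‖f t‖ = 1} with hA
  have hiso : ∀ t ∈ A, IsOpen ({t} : Set L) := by
    intro t ht
    have h1 : ¬ (nhdsWithin t (({t} : Set L)ᶜ)).NeBot := fun h => hcon t h ht
    have h2 : t ∉ closure (({t} : Set L)ᶜ) := by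
      rw [mem_closure_iff_nhdsWithin_neBot]; exact h1
    have h3 : t ∈ interior ({t} : Set L) := by
      rw [closure_compl, mem_compl_iff, not_not] at h2; exact h2
    rw [← interior_eq_iff_isOpen]
    refine Subset.antisymm interior_subset ?_
    intro s hs; rw [mem_singleton_iff] at hs; subst hs; exact h3
  have hnorm_cont : Continuous fun t => ‖f t‖ := f.continuous.norm
  set K : Set L := {t | (1:ℝ)/2 ≤ ‖f t‖} with hK
  have hKclosed : IsClosed K := isClosed_le continuous_const hnorm_cont
  have hKcompact : IsCompact K := by
    have h0 : Metric.ball (0:X) (1/2) ∈ nhds (0:X) := Metric.ball_mem_nhds _ (by norm_num)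
    have h1 : (fun t => f t) ⁻¹' Metric.ball (0:X) (1/2) ∈ cocompact L :=
      tendsto_def.mp (ZeroAtInftyContinuousMap.zero_at_infty' f) _ h0
    rw [mem_cocompact] at h1
    obtain ⟨K', hK'c, hK's⟩ := h1
    refine hK'c.of_isClosed_subset hKclosed ?_
    intro t ht
    by_contra htK'
    have h2 : f t ∈ Metric.ball (0:X) (1/2) := hK's htK'
    rw [mem_ball_zero_iff] at h2
    have h3 : (1:ℝ)/2 ≤ ‖f t‖ := ht
    linarith
  have hApos : ∀ t ∈ A, f t ≠ 0 := by
    intro t ht h0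
    have h1 : ‖f t‖ = 1 := ht
    rw [h0, norm_zero] at h1; norm_num at h1
  have hle1 : ∀ t : L, ‖f t‖ ≤ 1 := fun t => hf ▸ c0_norm_apply_le' f t
  have hAne : A.Nonempty := by
    have hKne : K.Nonempty := by
      by_contra hKe
      rw [not_nonempty_iff_eq_empty] at hKe
      have h1 : ‖f‖ ≤ 1/2 := by
        refine c0_norm_le' f (by norm_num) fun t => ?_
        by_contra h; push_neg at h
        have h2 : t ∈ K := le_of_lt h
        rw [hKe] at h2; exact h2
      rw [hf] at h1; linarith
    obtain ⟨t₁, ht₁, hmax⟩ := hKcompact.exists_isMaxOn hKne hnorm_cont.continuousOn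
    refine ⟨t₁, ?_⟩
    have hub : ‖f‖ ≤ max ‖f t₁‖ (1/2) := by
      refine c0_norm_le' f (le_max_of_le_right (by norm_num)) fun t => ?_
      by_cases htK : t ∈ K
      · exact le_max_of_le_left (hmax htK)
      · simp only [hK, mem_setOf_eq, not_le] at htK
        exact le_max_of_le_right htK.le
    have h1 : (1:ℝ) ≤ max ‖f t₁‖ (1/2) := hf ▸ hub
    have h2 : ‖f t₁‖ ≤ 1 := hle1 t₁
    have h3 : (1:ℝ) ≤ ‖f t₁‖ := by
      rcases max_cases ‖f t₁‖ (1/2) with ⟨he, _⟩ | ⟨he, _⟩ <;> rw [he] at h1 <;> linarith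
    exact le_antisymm h2 h3
  have hAsubK : A ⊆ K := fun t ht => by
    have h1 : ‖f t‖ = 1 := ht
    simp only [hK, mem_setOf_eq, h1]; norm_num
  have hAclosed : IsClosed A := isClosed_eq hnorm_cont continuous_const
  have hAcompact : IsCompact A := hKcompact.of_isClosed_subset hAclosed hAsubK
  have hAfin : A.Finite := by
    obtain ⟨s, hs⟩ := hAcompact.elim_finite_subcover (fun t : A => ({(t : L)} : Set L))
      (fun t => hiso t t.2) (fun t ht => mem_iUnion.mpr ⟨⟨t, ht⟩, rfl⟩)
    refine Finite.subset ?_ hs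
    exact s.finite_toSet.biUnion fun i _ => finite_singleton _
  have hAopen : IsOpen A := by
    rw [isOpen_iff_mem_nhds]
    intro t ht
    exact Filter.mem_of_superset ((hiso t ht).mem_nhds rfl) (by simpa using ht)
  obtain ⟨c, hc0, hc2, hcb⟩ : ∃ c : ℝ, 0 < c ∧ c ≤ 1/2 ∧ ∀ t, t ∉ A → ‖f t‖ ≤ 1 - c := by
    set B : Set L := K \ A with hB
    have hBcompact : IsCompact B := hKcompact.diff hAopen
    by_cases hBne : B.Nonempty
    · obtain ⟨tB, htB, hmaxB⟩ := hBcompact.exists_isMaxOn hBne hnorm_cont.continuousOn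
      have hm1 : ‖f tB‖ < 1 := lt_of_le_of_ne (hle1 tB) htB.2
      refine ⟨min (1 - ‖f tB‖) (1/2), lt_min (by linarith) (by norm_num), min_le_right _ _, ?_⟩
      intro t htA
      by_cases htK : t ∈ K
      · have h1 : ‖f t‖ ≤ ‖f tB‖ := hmaxB ⟨htK, htA⟩
        have h2 := min_le_left (1 - ‖f tB‖) (1/2)
        linarith
      · simp only [hK, mem_setOf_eq, not_le] at htK
        have h2 := min_le_right (1 - ‖f tB‖) (1/2)
        linarith
    · rw [not_nonempty_iff_eq_empty] at hBne
      refine ⟨1/2, by norm_num, le_refl _, fun t htA => ?_⟩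
      by_cases htK : t ∈ K
      · exfalso
        have h1 : t ∈ B := ⟨htK, htA⟩
        rw [hBne] at h1; exact h1
      · simp only [hK, mem_setOf_eq, not_le] at htK
        linarith
  have hφex : ∀ t : L, ∃ φ : X →L[ℝ] ℝ, ‖φ‖ ≤ 1 ∧ (t ∈ A → ‖φ‖ = 1 ∧ φ (f t) = 1) := by
    intro t
    by_cases ht : t ∈ A
    · obtain ⟨φ, hφ1, hφ2⟩ := exists_dual_vector ℝ (f t) (norm_ne_zero_iff.mpr (hApos t ht))
      refine ⟨φ, le_of_eq hφ1, fun _ => ⟨hφ1, ?_⟩⟩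
      rw [hφ2]; exact_mod_cast ht
    · exact ⟨0, by simp, fun h => absurd h ht⟩
  choose φ hφ1 hφ2 using hφex
  have hδex : ∀ t : L, ∃ d > (0:ℝ), t ∈ A → ∀ y : X, ‖y‖ ≤ 1 → 1 - d < φ t y → ‖f t - y‖ < 1 := by
    intro t
    by_cases ht : t ∈ A
    · obtain ⟨d, hd, H⟩ := lur_key' hLUR (f t) ht (φ t) (hφ1 t) (hφ2 t ht).2
      exact ⟨d, hd, fun _ => H⟩
    · exact ⟨1, one_pos, fun h => absurd h ht⟩
  choose δ hδpos hδ using hδex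
  set Af : Finset L := hAfin.toFinset with hAf
  have hAfmem : ∀ t, t ∈ Af ↔ t ∈ A := fun t => hAfin.mem_toFinset
  have hAfne : Af.Nonempty := by
    obtain ⟨t, ht⟩ := hAne; exact ⟨t, (hAfmem t).mpr ht⟩
  set n : ℕ := Af.card with hn
  have hnpos : 0 < n := Finset.card_pos.mpr hAfne
  have hnR : (0:ℝ) < (n:ℝ) := by exact_mod_cast hnpos
  set δ0 : ℝ := Af.inf' hAfne δ with hδ0
  have hδ0pos : 0 < δ0 := by
    rw [hδ0, Finset.lt_inf'_iff]
    exact fun t _ => hδpos t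
  have hδ0le : ∀ t ∈ Af, δ0 ≤ δ t := fun t ht => Finset.inf'_le _ ht
  have hφapp : ∀ (t : L) (y : X), φ t y ≤ ‖y‖ := by
    intro t y
    calc φ t y ≤ |φ t y| := le_abs_self _
    _ = ‖φ t y‖ := (Real.norm_eq_abs _).symm
    _ ≤ ‖φ t‖ * ‖y‖ := (φ t).le_opNorm _
    _ ≤ 1 * ‖y‖ := by gcongr; exact hφ1 t
    _ = ‖y‖ := one_mul _
  have hφabs : ∀ (t : L) (y : X), |φ t y| ≤ ‖y‖ := by
    intro t y
    rw [abs_le]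
    refine ⟨?_, hφapp t y⟩
    have h1 := hφapp t (-y)
    simp only [map_neg, norm_neg] at h1
    linarith
  set Λ : ZeroAtInftyContinuousMap L X →ₗ[ℝ] ℝ :=
    { toFun := fun g => (n:ℝ)⁻¹ * ∑ t ∈ Af, φ t (g t)
      map_add' := by
        intro g h
        simp only [ZeroAtInftyContinuousMap.coe_add, Pi.add_apply, map_add,
          Finset.sum_add_distrib]
        ring
      map_smul' := by
        intro r g
        simp only [ZeroAtInftyContinuousMap.coe_smul, Pi.smul_apply, _root_.map_smul,
          smul_eq_mul, RingHom.id_apply]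
        rw [← Finset.mul_sum]
        ring } with hΛ
  have hΛbound : ∀ g : ZeroAtInftyContinuousMap L X, ‖Λ g‖ ≤ 1 * ‖g‖ := by
    intro g
    have h1 : |∑ t ∈ Af, φ t (g t)| ≤ (n:ℝ) * ‖g‖ := by
      calc |∑ t ∈ Af, φ t (g t)| ≤ ∑ t ∈ Af, |φ t (g t)| := Finset.abs_sum_le_sum_abs _ _
      _ ≤ ∑ _t ∈ Af, ‖g‖ := Finset.sum_le_sum fun t _ =>
          le_trans (hφabs t (g t)) (c0_norm_apply_le' g t)
      _ = (n:ℝ) * ‖g‖ := by rw [Finset.sum_const, nsmul_eq_mul]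
    have h2 : ‖Λ g‖ = (n:ℝ)⁻¹ * |∑ t ∈ Af, φ t (g t)| := by
      simp only [hΛ, LinearMap.coe_mk, AddHom.coe_mk, Real.norm_eq_abs, abs_mul,
        abs_inv, Nat.abs_cast]
    rw [h2, one_mul]
    calc (n:ℝ)⁻¹ * |∑ t ∈ Af, φ t (g t)|
        ≤ (n:ℝ)⁻¹ * ((n:ℝ) * ‖g‖) :=
          mul_le_mul_of_nonneg_left h1 (inv_nonneg.mpr hnR.le)
      _ = ‖g‖ := by rw [← mul_assoc, inv_mul_cancel₀ (ne_of_gt hnR), one_mul]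
  set Φ : ZeroAtInftyContinuousMap L X →L[ℝ] ℝ := Λ.mkContinuous 1 hΛbound with hΦ
  have hΦapp : ∀ g, Φ g = (n:ℝ)⁻¹ * ∑ t ∈ Af, φ t (g t) := fun g => rfl
  have hΦf : Φ f = 1 := by
    rw [hΦapp]
    have h1 : ∀ t ∈ Af, φ t (f t) = 1 := fun t ht => (hφ2 t ((hAfmem t).mp ht)).2
    rw [Finset.sum_congr rfl h1, Finset.sum_const, nsmul_eq_mul, mul_one, ← hn,
      inv_mul_cancel₀ (ne_of_gt hnR)]
  have hΦnorm : ‖Φ‖ = 1 := by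
    refine le_antisymm (Λ.mkContinuous_norm_le (by norm_num) hΛbound) ?_
    have h1 := Φ.le_opNorm f
    rw [hΦf, hf, mul_one] at h1
    simpa using h1
  set α : ℝ := δ0 / n with hα
  have hαpos : 0 < α := div_pos hδ0pos hnR
  have hnα : (n:ℝ) * α = δ0 := by
    rw [hα, mul_comm, div_mul_cancel₀ _ (ne_of_gt hnR)]
  set S : Set (ZeroAtInftyContinuousMap L X) :=
    {g | g ∈ closedBall (0:ZeroAtInftyContinuousMap L X) 1 ∧ 1 - α < RCLike.re (Φ g)} with hS
  have hSslice : IsSlice ℝ S := ⟨Φ, α, hΦnorm, hαpos, rfl⟩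
  have hfS : f ∈ S := by
    refine ⟨?_, ?_⟩
    · rw [Metric.mem_closedBall, dist_zero_right, hf]
    · show 1 - α < Φ f
      rw [hΦf]; linarith
  have hkey := hΔ.2 S hSslice hfS
  have hub2 : ∀ v ∈ (fun y => ‖f - y‖) '' S, v ≤ 2 - c := by
    rintro v ⟨g, hgS, rfl⟩
    obtain ⟨hg1, hg2⟩ := hgS
    rw [Metric.mem_closedBall, dist_zero_right] at hg1
    refine c0_norm_le' _ (by linarith) fun t => ?_
    have happ : (f - g) t = f t - g t := by
      simp [ZeroAtInftyContinuousMap.coe_sub]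
    rw [happ]
    by_cases htA : t ∈ A
    · have htAf : t ∈ Af := (hAfmem t).mpr htA
      have hg2' : 1 - α < (n:ℝ)⁻¹ * ∑ s ∈ Af, φ s (g s) := by
        have h2 : 1 - α < Φ g := hg2
        rw [hΦapp] at h2; exact h2
      have hsum : (n:ℝ) - δ0 < ∑ s ∈ Af, φ s (g s) := by
        have h3 : (n:ℝ) * (1 - α) < (n:ℝ) * ((n:ℝ)⁻¹ * ∑ s ∈ Af, φ s (g s)) :=
          mul_lt_mul_of_pos_left hg2' hnR
        rw [← mul_assoc, mul_inv_cancel₀ (ne_of_gt hnR), one_mul] at h3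
        calc (n:ℝ) - δ0 = (n:ℝ) * (1 - α) := by rw [mul_sub, mul_one, hnα]
        _ < _ := h3
      have hsplit : ∑ s ∈ Af, φ s (g s) = φ t (g t) + ∑ s ∈ Af.erase t, φ s (g s) :=
        (Finset.add_sum_erase _ (fun s => φ s (g s)) htAf).symm
      have hrest : ∑ s ∈ Af.erase t, φ s (g s) ≤ (n:ℝ) - 1 := by
        calc ∑ s ∈ Af.erase t, φ s (g s) ≤ ∑ _s ∈ Af.erase t, (1:ℝ) :=
          Finset.sum_le_sum fun s _ =>
            le_trans (hφapp s (g s)) (le_trans (c0_norm_apply_le' g s) hg1)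
        _ = ((Af.erase t).card : ℝ) := by rw [Finset.sum_const, nsmul_eq_mul, mul_one]
        _ = (n:ℝ) - 1 := by
          rw [Finset.card_erase_of_mem htAf]
          have h4 : 1 ≤ Af.card := hnpos
          push_cast [Nat.cast_sub h4]
          ring
      have hterm : 1 - δ0 < φ t (g t) := by
        rw [hsplit] at hsum
        linarith
      have hlt : 1 - δ t < φ t (g t) := by
        have h4 := hδ0le t htAf
        linarith
      have h5 := hδ t htA (g t) (le_trans (c0_norm_apply_le' g t) hg1) hlt
      linarith
    · have h6 := hcb t htA
      calc ‖f t - g t‖ ≤ ‖f t‖ + ‖g t‖ := norm_sub_le _ _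
      _ ≤ (1 - c) + 1 := add_le_add h6 (le_trans (c0_norm_apply_le' g t) hg1)
      _ = 2 - c := by ring
  have hne : ((fun y => ‖f - y‖) '' S).Nonempty := ⟨_, ⟨f, hfS, rfl⟩⟩
  have hfinal := csSup_le hne hub2
  rw [hkey] at hfinal
  linarith
end

section
/- Let (Ω, Σ, μ) be a measure space and X a Banach space. Suppose Ω contains an atom A of finite positive measure, Ω∖A has positive measure, and X contains a denting point of its unit ball. Then L₁(μ, X) contains no ccs-Daugavet point. -/
open Metric Set Filter MeasureTheory

section Aux

theorem ae_const_on_atom {Ω : Type*} [MeasurableSpace Ω] {μ : Measure Ω}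
    {X : Type*} [NormedAddCommGroup X] {A : Set Ω} (hA : MeasAtom μ A)
    (h : Ω → X) (hm : AEStronglyMeasurable h μ) :
    ∃ c : X, ∀ᵐ ω ∂(μ.restrict A), h ω = c := by
  obtain ⟨g, hg_sm, hgh⟩ := hm
  letI : MeasurableSpace X := borel X
  haveI : BorelSpace X := ⟨rfl⟩
  have hgmeas : Measurable g := hg_sm.measurable
  obtain ⟨t, htc, htd⟩ := hg_sm.isSeparable_range
  -- for each n, find a point of t whose closed-ball preimage is co-null in A
  have key : ∀ n : ℕ, ∃ p ∈ t, μ (A \ (A ∩ g ⁻¹' closedBall p (1/(n+1)))) = 0 := by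
    intro n
    have hr : (0:ℝ) < 1/(n+1) := by positivity
    have hcover : A ⊆ ⋃ p ∈ t, A ∩ g ⁻¹' closedBall p (1/(n+1)) := by
      intro ω hω
      have : g ω ∈ closure t := htd (mem_range_self ω)
      obtain ⟨p, hp, hd⟩ := Metric.mem_closure_iff.1 this _ hr
      refine mem_biUnion hp ⟨hω, ?_⟩
      simp only [mem_preimage, mem_closedBall]
      exact hd.le
    by_contra hcon
    push_neg at hcon
    have hpos : ∃ p ∈ t, 0 < μ (A ∩ g ⁻¹' closedBall p (1/(n+1))) := by
      by_contra hall
      push_neg at hall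
      have : μ (⋃ p ∈ t, A ∩ g ⁻¹' closedBall p (1/(n+1))) = 0 := by
        refine (measure_biUnion_null_iff htc).2 fun p hp => ?_
        exact le_antisymm (hall p hp) (zero_le)
      exact absurd (le_antisymm (le_trans (measure_mono hcover) this.le) (zero_le))
        (ne_of_gt hA.2.1)
    obtain ⟨p, hp, hppos⟩ := hpos
    rcases hA.2.2 _ inter_subset_left (hA.1.inter (hgmeas measurableSet_closedBall)) with h0 | h0
    · exact absurd h0 (ne_of_gt hppos)
    · exact hcon p hp h0
  choose p hpt hp0 using key
  set E : Set Ω := A ∩ ⋂ n : ℕ, g ⁻¹' closedBall (p n) (1/(n+1)) with hE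
  have hAE : μ (A \ E) = 0 := by
    have : A \ E ⊆ ⋃ n : ℕ, A \ (A ∩ g ⁻¹' closedBall (p n) (1/(n+1))) := by
      intro ω hω
      simp only [hE, mem_diff, mem_inter_iff, mem_iInter, not_and, not_forall] at hω
      obtain ⟨n, hn⟩ := hω.2 hω.1
      exact mem_iUnion.2 ⟨n, hω.1, fun hc => hn hc.2⟩
    exact le_antisymm (le_trans (measure_mono this) (le_of_eq (measure_iUnion_null hp0)))
      (zero_le)
  have hEpos : 0 < μ E := by
    by_contra hc
    push_neg at hc
    have hE0 : μ E = 0 := le_antisymm hc (zero_le)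
    have : μ A ≤ μ E + μ (A \ E) :=
      le_trans (measure_mono (by intro ω hω; by_cases hωE : ω ∈ E
                                 · exact mem_union_left _ hωE
                                 · exact mem_union_right _ ⟨hω, hωE⟩))
        (measure_union_le _ _)
    rw [hE0, hAE, add_zero] at this
    exact absurd (le_antisymm this (zero_le)) (ne_of_gt hA.2.1)
  obtain ⟨ω₀, hω₀⟩ := nonempty_of_measure_ne_zero (ne_of_gt hEpos)
  refine ⟨g ω₀, ?_⟩
  have hgc : ∀ ω ∈ E, g ω = g ω₀ := by
    intro ω hω
    refine eq_of_forall_dist_le fun ε hε => ?_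
    obtain ⟨n, hn⟩ := exists_nat_gt (2/ε)
    have hn1 : (2:ℝ)/(n+1) < ε := by
      rw [div_lt_iff₀ (by positivity)]
      rw [div_lt_iff₀ hε] at hn
      nlinarith
    have h1 : dist (g ω) (p n) ≤ 1/(n+1) := (mem_iInter.1 hω.2 n : _)
    have h2 : dist (g ω₀) (p n) ≤ 1/(n+1) := (mem_iInter.1 hω₀.2 n : _)
    calc dist (g ω) (g ω₀) ≤ dist (g ω) (p n) + dist (g ω₀) (p n) := dist_triangle_right _ _ _
      _ ≤ 1/(n+1) + 1/(n+1) := add_le_add h1 h2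
      _ = 2/(n+1) := by ring
      _ ≤ ε := hn1.le
  have hg_ae : ∀ᵐ ω ∂(μ.restrict A), g ω = g ω₀ := by
    rw [ae_restrict_iff' hA.1]
    refine measure_mono_null (fun ω hω => ?_) hAE
    simp only [mem_compl_iff, mem_setOf_eq, Classical.not_imp] at hω
    exact ⟨hω.1, fun hc => hω.2 (hgc ω hc)⟩
  filter_upwards [ae_restrict_of_ae hgh, hg_ae] with ω h1 h2
  rw [h1, h2]

variable {𝕜 : Type*} [RCLike 𝕜] {Ω : Type*} [MeasurableSpace Ω] {μ : Measure Ω}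
  {X : Type*} [NormedAddCommGroup X] [NormedSpace 𝕜 X] [CompleteSpace X]
  [NormedSpace ℝ X] [SMulCommClass ℝ 𝕜 X]

theorem norm_L1_eq (h : Lp X 1 μ) : ‖h‖ = ∫ ω, ‖h ω‖ ∂μ :=
  L1.norm_eq_integral_norm h

theorem setIntegral_norm_le (h : Lp X 1 μ) (A : Set Ω) :
    ∫ ω in A, ‖h ω‖ ∂μ ≤ ‖h‖ := by
  rw [norm_L1_eq]
  exact setIntegral_le_integral (L1.integrable_coeFn h).norm
    (Eventually.of_forall fun ω => norm_nonneg _)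

/-- integration over `A` as a continuous linear map on L¹ -/
noncomputable def intA (𝕜 : Type*) [RCLike 𝕜] {Ω : Type*} [MeasurableSpace Ω] (μ : Measure Ω)
    {X : Type*} [NormedAddCommGroup X] [NormedSpace 𝕜 X] [CompleteSpace X]
    [NormedSpace ℝ X] [SMulCommClass ℝ 𝕜 X] (A : Set Ω) :
    Lp X 1 μ →L[𝕜] X :=
  LinearMap.mkContinuous
    { toFun := fun h => ∫ ω in A, h ω ∂μ
      map_add' := fun h h' => by
        rw [← integral_add ((L1.integrable_coeFn h).restrict)
          ((L1.integrable_coeFn h').restrict)]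
        exact integral_congr_ae (ae_restrict_of_ae (Lp.coeFn_add h h'))
      map_smul' := fun c h => by
        rw [RingHom.id_apply, ← integral_smul]
        exact integral_congr_ae (ae_restrict_of_ae (Lp.coeFn_smul c h)) }
    1 fun h => by
      simp only [LinearMap.coe_mk, AddHom.coe_mk, one_mul]
      exact le_trans (norm_integral_le_integral_norm _) (setIntegral_norm_le h A)

theorem intA_apply (A : Set Ω) (h : Lp X 1 μ) : intA 𝕜 μ A h = ∫ ω in A, h ω ∂μ := rfl

theorem norm_intA_le (A : Set Ω) (h : Lp X 1 μ) :
    ‖intA 𝕜 μ A h‖ ≤ ∫ ω in A, ‖h ω‖ ∂μ :=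
  norm_integral_le_integral_norm _

theorem intA_indicator (A : Set Ω) (hAm : MeasurableSet A) (hAfin : μ A ≠ ⊤) (c : X) :
    intA 𝕜 μ A (indicatorConstLp 1 hAm hAfin c) = (μ A).toReal • c := by
  rw [intA_apply]
  have h1 : ∫ ω in A, (indicatorConstLp 1 hAm hAfin c) ω ∂μ
      = ∫ ω in A, A.indicator (fun _ => c) ω ∂μ :=
    integral_congr_ae (ae_restrict_of_ae (indicatorConstLp_coeFn))
  rw [h1, setIntegral_indicator hAm, inter_self, setIntegral_const]; rfl

theorem intA_opNorm_le (A : Set Ω) : ‖intA 𝕜 μ A (X := X)‖ ≤ 1 :=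
  LinearMap.mkContinuous_norm_le _ zero_le_one _

theorem setIntegral_ae_const {A : Set Ω} (hAm : MeasurableSet A) (h : Lp X 1 μ) {c : X}
    (hc : ∀ᵐ ω ∂(μ.restrict A), h ω = c) :
    intA 𝕜 μ A h = (μ A).toReal • c := by
  rw [intA_apply, integral_congr_ae hc, setIntegral_const]; rfl

theorem setIntegral_norm_eq_const {A : Set Ω} (hAm : MeasurableSet A) (h : Lp X 1 μ) {c : X}
    (hc : ∀ᵐ ω ∂(μ.restrict A), h ω = c) :
    ∫ ω in A, ‖h ω‖ ∂μ = (μ A).toReal * ‖c‖ := by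
  have : ∀ᵐ ω ∂(μ.restrict A), ‖h ω‖ = ‖c‖ := by
    filter_upwards [hc] with ω hω; rw [hω]
  rw [integral_congr_ae this, setIntegral_const, smul_eq_mul]; rfl

/-- data about an element of the slice of `Λ = f ∘ intA` -/
theorem slice_data {A : Set Ω} (hA : MeasAtom μ A)
    (f : X →L[𝕜] 𝕜) (hf1 : ‖f‖ = 1) {β : ℝ} (h : Lp X 1 μ)
    (hh1 : ‖h‖ ≤ 1) (hre : 1 - β < RCLike.re (f (intA 𝕜 μ A h))) :
    ∃ c : X, (∀ᵐ ω ∂(μ.restrict A), h ω = c) ∧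
      intA 𝕜 μ A h = (μ A).toReal • c ∧ ‖(μ A).toReal • c‖ ≤ 1 ∧
      ∫ ω in Aᶜ, ‖h ω‖ ∂μ < β := by
  obtain ⟨c, hc⟩ := ae_const_on_atom hA h (Lp.aestronglyMeasurable h)
  have hu : intA 𝕜 μ A h = (μ A).toReal • c := setIntegral_ae_const hA.1 h hc
  have hnormint : ∫ ω in A, ‖h ω‖ ∂μ = ‖(μ A).toReal • c‖ := by
    rw [setIntegral_norm_eq_const hA.1 h hc, norm_smul, Real.norm_eq_abs,
      abs_of_nonneg ENNReal.toReal_nonneg]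
  have hintle : ∫ ω in A, ‖h ω‖ ∂μ ≤ 1 := le_trans (setIntegral_norm_le h A) hh1
  have hule : ‖(μ A).toReal • c‖ ≤ 1 := by rw [← hnormint]; exact hintle
  refine ⟨c, hc, hu, hule, ?_⟩
  -- re f u ≤ ‖u‖
  have hfu : RCLike.re (f (intA 𝕜 μ A h)) ≤ ‖(μ A).toReal • c‖ := by
    calc RCLike.re (f (intA 𝕜 μ A h)) ≤ ‖f (intA 𝕜 μ A h)‖ := RCLike.re_le_norm _
      _ ≤ ‖f‖ * ‖intA 𝕜 μ A h‖ := f.le_opNorm _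
      _ = ‖intA 𝕜 μ A h‖ := by rw [hf1, one_mul]
      _ = ‖(μ A).toReal • c‖ := by rw [hu]
  have hsplit : (∫ ω in A, ‖h ω‖ ∂μ) + ∫ ω in Aᶜ, ‖h ω‖ ∂μ = ∫ ω, ‖h ω‖ ∂μ :=
    integral_add_compl hA.1 (L1.integrable_coeFn h).norm
  have : ∫ ω in Aᶜ, ‖h ω‖ ∂μ = ‖h‖ - ∫ ω in A, ‖h ω‖ ∂μ := by
    rw [norm_L1_eq, ← hsplit]; ring
  rw [this, hnormint]
  linarith

theorem slice_dist {A : Set Ω} (hA : MeasAtom μ A)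
    (f : X →L[𝕜] 𝕜) (hf1 : ‖f‖ = 1) {β : ℝ}
    (h h' : Lp X 1 μ) (hh1 : ‖h‖ ≤ 1) (hh1' : ‖h'‖ ≤ 1)
    (hre : 1 - β < RCLike.re (f (intA 𝕜 μ A h)))
    (hre' : 1 - β < RCLike.re (f (intA 𝕜 μ A h'))) :
    ‖h - h'‖ ≤ ‖intA 𝕜 μ A h - intA 𝕜 μ A h'‖ + 2 * β := by
  obtain ⟨c, hc, hu, -, hcomp⟩ := slice_data hA f hf1 h hh1 hre
  obtain ⟨c', hc', hu', -, hcomp'⟩ := slice_data hA f hf1 h' hh1' hre'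
  have hsub : ∀ᵐ ω ∂μ, (h - h') ω = h ω - h' ω := Lp.coeFn_sub h h'
  have hsubA : ∀ᵐ ω ∂(μ.restrict A), (h - h') ω = c - c' := by
    filter_upwards [ae_restrict_of_ae hsub, hc, hc'] with ω h1 h2 h3
    rw [h1, h2, h3]
  have hIA : ∫ ω in A, ‖(h - h') ω‖ ∂μ = ‖intA 𝕜 μ A h - intA 𝕜 μ A h'‖ := by
    rw [setIntegral_norm_eq_const hA.1 (h - h') hsubA, hu, hu', ← smul_sub,
      norm_smul, Real.norm_eq_abs, abs_of_nonneg ENNReal.toReal_nonneg]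
  have hIAc : ∫ ω in Aᶜ, ‖(h - h') ω‖ ∂μ ≤
      (∫ ω in Aᶜ, ‖h ω‖ ∂μ) + ∫ ω in Aᶜ, ‖h' ω‖ ∂μ := by
    rw [← integral_add ((L1.integrable_coeFn h).norm.restrict)
      ((L1.integrable_coeFn h').norm.restrict)]
    refine integral_mono_ae ((L1.integrable_coeFn (h - h')).norm.restrict)
      (((L1.integrable_coeFn h).norm.restrict).add
        ((L1.integrable_coeFn h').norm.restrict)) ?_
    filter_upwards [ae_restrict_of_ae hsub] with ω hω
    rw [hω]; exact norm_sub_le _ _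
  have hsplit : (∫ ω in A, ‖(h - h') ω‖ ∂μ) + ∫ ω in Aᶜ, ‖(h - h') ω‖ ∂μ
      = ∫ ω, ‖(h - h') ω‖ ∂μ := integral_add_compl hA.1 (L1.integrable_coeFn (h - h')).norm
  calc ‖h - h'‖ = ∫ ω, ‖(h - h') ω‖ ∂μ := norm_L1_eq _
    _ = (∫ ω in A, ‖(h - h') ω‖ ∂μ) + ∫ ω in Aᶜ, ‖(h - h') ω‖ ∂μ := hsplit.symm
    _ ≤ ‖intA 𝕜 μ A h - intA 𝕜 μ A h'‖ + 2 * β := by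
        rw [hIA]
        have := le_trans hIAc (by linarith : (∫ ω in Aᶜ, ‖h ω‖ ∂μ) + ∫ ω in Aᶜ, ‖h' ω‖ ∂μ ≤ 2*β)
        linarith

end Aux

/-- If `μ` has an atom `A` of finite positive measure with `μ(Ω ∖ A) > 0` and `X` has a denting
point, then `L₁(μ, X)` contains no ccs-Daugavet point. -/
theorem no_ccsDaugavet_L1 {𝕜 : Type*} [RCLike 𝕜] {Ω : Type*} [MeasurableSpace Ω]
    {μ : MeasureTheory.Measure Ω} {X : Type*} [NormedAddCommGroup X] [NormedSpace 𝕜 X]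
    [CompleteSpace X] (A : Set Ω) (hA : MeasAtom μ A) (hAfin : μ A < ⊤) (hcompl : 0 < μ Aᶜ)
    (x : X) (hx : DentingPt 𝕜 x) :
    ¬ ∃ f : MeasureTheory.Lp X 1 μ, CcsDaugavetPt 𝕜 f := by
  haveI : NormedSpace ℝ X := NormedSpace.restrictScalars ℝ 𝕜 X
  haveI : SMulCommClass ℝ 𝕜 X := inferInstance
  rintro ⟨F, hF1, hFccs⟩
  obtain ⟨hx1, hxd⟩ := hx
  obtain ⟨S, hS, hxS, hSd⟩ := hxd (1/4) (by norm_num)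
  obtain ⟨f, α, hf1, hα, hSeq⟩ := hS
  set β : ℝ := min α (1/8) with hβdef
  have hβ0 : 0 < β := lt_min hα (by norm_num)
  have hβα : β ≤ α := min_le_left _ _
  have hβ8 : β ≤ 1/8 := min_le_right _ _
  set Λ : Lp X 1 μ →L[𝕜] 𝕜 := f.comp (intA 𝕜 μ A) with hΛ
  have hμA0 : (0:ℝ) < (μ A).toReal := ENNReal.toReal_pos (ne_of_gt hA.2.1) hAfin.ne
  -- ‖Λ‖ = 1
  have hΛ1 : ‖Λ‖ = 1 := by
    refine le_antisymm ?_ ?_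
    · calc ‖Λ‖ ≤ ‖f‖ * ‖intA 𝕜 μ A‖ := ContinuousLinearMap.opNorm_comp_le _ _
        _ ≤ 1 * 1 := mul_le_mul (le_of_eq hf1) (intA_opNorm_le A) (norm_nonneg _) zero_le_one
        _ = 1 := by norm_num
    · refine le_of_forall_lt fun t ht => ?_
      have : t < ‖f‖ := by rwa [hf1]
      obtain ⟨u, hu1, hut⟩ := f.exists_lt_apply_of_lt_opNorm this
      set hu : Lp X 1 μ := indicatorConstLp 1 hA.1 hAfin.ne (((μ A).toReal)⁻¹ • u) with hhu
      have hn : ‖hu‖ = ‖u‖ := by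
        rw [hhu, norm_indicatorConstLp one_ne_zero ENNReal.one_ne_top]
        rw [norm_smul, Real.norm_eq_abs, abs_of_nonneg (inv_nonneg.2 hμA0.le)]
        simp only [ENNReal.toReal_one, one_div, Real.rpow_one, Measure.real]
        field_simp
        simp only [Real.rpow_one, pow_one]; ring
      have happ : Λ hu = f u := by
        rw [hΛ, ContinuousLinearMap.comp_apply, hhu,
          intA_indicator A hA.1 hAfin.ne, smul_smul, mul_inv_cancel₀ (ne_of_gt hμA0), one_smul]
      calc t < ‖f u‖ := hut
        _ = ‖Λ hu‖ := by rw [happ]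
        _ ≤ ‖Λ‖ * ‖hu‖ := Λ.le_opNorm _
        _ ≤ ‖Λ‖ * 1 := by
            refine mul_le_mul_of_nonneg_left ?_ (norm_nonneg _)
            rw [hn]; exact hu1.le
        _ = ‖Λ‖ := mul_one _
  -- the two slices
  set C : Set (Lp X 1 μ) := {y | y ∈ closedBall 0 1 ∧ 1 - β < RCLike.re (Λ y)} with hC
  set Cneg : Set (Lp X 1 μ) := {y | y ∈ closedBall 0 1 ∧ 1 - β < RCLike.re ((-Λ) y)} with hCneg
  -- any two elements of C are within 1/2
  have hCd : ∀ h ∈ C, ∀ h' ∈ C, ‖h - h'‖ ≤ 1/2 := by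
    intro h hh h' hh'
    rw [hC, mem_setOf_eq, mem_closedBall_zero_iff] at hh hh'
    have h1 := hh.2; have h1' := hh'.2
    rw [hΛ, ContinuousLinearMap.comp_apply] at h1 h1'
    -- show T h, (intA 𝕜 μ A) h' ∈ S
    have hmem : ∀ g : Lp X 1 μ, ‖g‖ ≤ 1 → 1 - β < RCLike.re (f ((intA 𝕜 μ A) g)) → (intA 𝕜 μ A) g ∈ S := by
      intro g hg1 hgre
      obtain ⟨c, -, hu, hule, -⟩ := slice_data hA f hf1 g hg1 hgre
      rw [hSeq, mem_setOf_eq, mem_closedBall_zero_iff]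
      refine ⟨by rw [hu]; exact hule, ?_⟩
      calc (1:ℝ) - α ≤ 1 - β := by linarith
        _ < RCLike.re (f ((intA 𝕜 μ A) g)) := hgre
    have hTm : (intA 𝕜 μ A) h ∈ S := hmem h hh.1 h1
    have hTm' : (intA 𝕜 μ A) h' ∈ S := hmem h' hh'.1 h1'
    have hSb : Bornology.IsBounded S := by
      rw [hSeq]
      exact (isBounded_closedBall (x := (0:X)) (r := 1)).subset fun y hy => hy.1
    have hd : ‖(intA 𝕜 μ A) h - (intA 𝕜 μ A) h'‖ ≤ Metric.diam S := by
      rw [← dist_eq_norm]; exact dist_le_diam_of_mem hSb hTm hTm'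
    have := slice_dist hA f hf1 h h' hh.1 hh'.1 h1 h1'
    calc ‖h - h'‖ ≤ ‖intA 𝕜 μ A h - intA 𝕜 μ A h'‖ + 2 * β := this
      _ ≤ Metric.diam S + 2 * β := by linarith
      _ ≤ 1/4 + 2 * (1/8) := by linarith [hSd.le]
      _ = 1/2 := by norm_num
  -- the convex combination of slices
  set D : Set (Lp X 1 μ) := {z | ∃ y : Fin 2 → Lp X 1 μ,
      (∀ i, y i ∈ ![C, Cneg] i) ∧ z = ∑ i, ((![1/2, 1/2] i : ℝ) : 𝕜) • y i} with hD
  have hDccs : IsCCS 𝕜 D := by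
    refine ⟨2, ![1/2, 1/2], ![C, Cneg], by norm_num, ?_, ?_, ?_, rfl⟩
    · intro i; fin_cases i <;> norm_num
    · simp [Fin.sum_univ_two]; norm_num
    · intro i
      fin_cases i
      · exact ⟨Λ, β, hΛ1, hβ0, rfl⟩
      · exact ⟨-Λ, β, by rw [norm_neg]; exact hΛ1, hβ0, rfl⟩
  -- every element of D has norm ≤ 1/4
  have hDsmall : ∀ g ∈ D, ‖g‖ ≤ 1/4 := by
    rintro g ⟨y, hy, rfl⟩
    have hy0 : y 0 ∈ C := hy 0
    have hy1 : y 1 ∈ Cneg := hy 1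
    have hy1' : -(y 1) ∈ C := by
      rw [hCneg, mem_setOf_eq] at hy1
      rw [hC, mem_setOf_eq]
      constructor
      · rw [mem_closedBall_zero_iff, norm_neg, ← mem_closedBall_zero_iff]; exact hy1.1
      · rw [map_neg]
        simpa using hy1.2
    have : ∑ i, ((![1/2, 1/2] i : ℝ) : 𝕜) • y i = ((1/2 : ℝ) : 𝕜) • (y 0 + y 1) := by
      rw [Fin.sum_univ_two, smul_add]
      norm_num
    rw [this, norm_smul]
    have h12 : ‖((1/2 : ℝ) : 𝕜)‖ = 1/2 := by
      rw [RCLike.norm_ofReal]; norm_num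
    rw [h12]
    have : ‖y 0 + y 1‖ = ‖y 0 - (-(y 1))‖ := by rw [sub_neg_eq_add]
    rw [this]
    have := hCd (y 0) hy0 (-(y 1)) hy1'
    linarith
  -- contradiction
  have h2 := hFccs D hDccs
  have hle : sSup ((fun y => ‖F - y‖) '' D) ≤ 3/2 := by
    refine Real.sSup_le ?_ (by norm_num)
    rintro r ⟨g, hg, rfl⟩
    calc ‖F - g‖ ≤ ‖F‖ + ‖g‖ := norm_sub_le _ _
      _ ≤ 1 + 1/4 := by rw [hF1]; linarith [hDsmall g hg]
      _ ≤ 3/2 := by norm_num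
  rw [h2] at hle
  norm_num at hle
end
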